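/- arXiv:1110.0058 — 2 statements merged into one kernel-verified Lean document; each statement's English description precedes it below -/
import Mathlib

section
/- The orthonormal polynomials are orthonormal with respect to the discrete measure defined by the n-point Gaussian quadrature rule: for all 0 ≤ i, k ≤ n−1, Σ_{j=0}^{n−1} ν_j π_i(λ_j) π_k(λ_j) equals 1 if i = k and 0 otherwise; equivalently, the n×n matrix Q with entries Q(i,j) = √ν_j · π_i(λ_j) is an orthogonal matrix. -/
open MeasureTheory Polynomial Matrix

/-!
Writing `q = P n * h + r` with `deg h, deg r < n` shows that the interpolatory quadrature rule at
the zeros of `P n` integrates every `q` of degree `< 2n` exactly, since `P n ⟂ h` and `q = r` at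
the nodes. Applied to `π i * π k`, this says that `V i j = π i (λ j)` satisfies
`V * diagonal w * Vᵀ = 1` for the interpolatory weights `w`. A one-sided inverse of a square
matrix is two-sided, so also `diagonal w * Vᵀ * V = 1`, whose diagonal reads
`w j * ∑ i, π i (λ j) ^ 2 = 1`: the weights are `ν`. Finally `Q = V * diagonal √ν`.
-/

section Quadrature

variable {ι : Type*} [Fintype ι] [DecidableEq ι]

noncomputable def lagrangeWeight (μ : Measure ℝ) (v : ι → ℝ) (j : ι) : ℝ :=
  ∫ t, (Lagrange.basis Finset.univ v j).eval t ∂μ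

variable {μ : Measure ℝ} (hmom : ∀ n : ℕ, Integrable (fun t : ℝ => t ^ n) μ)
include hmom

theorem integrable_eval_of_integrable_pow (p : ℝ[X]) : Integrable (fun t => p.eval t) μ := by
  simp_rw [eval_eq_sum, Polynomial.sum]
  exact integrable_finsetSum _ fun i _ => (hmom i).const_mul _

theorem integral_eval_eq_sum_lagrangeWeight {v : ι → ℝ} (hv : Function.Injective v)
    {r : ℝ[X]} (hr : r.degree < Fintype.card ι) :
    ∫ t, r.eval t ∂μ = ∑ j, lagrangeWeight μ v j * r.eval (v j) := by
  have hinterp := Lagrange.eq_interpolate (s := Finset.univ) hv.injOn (by simpa using hr)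
  conv_lhs => rw [hinterp, Lagrange.interpolate_apply]
  simp only [eval_finsetSum, eval_mul, eval_C]
  rw [integral_finsetSum _ fun j _ => (integrable_eval_of_integrable_pow hmom _).const_mul _]
  exact Finset.sum_congr rfl fun j _ => by rw [integral_const_mul, lagrangeWeight, mul_comm]

theorem integral_eval_eq_sum_lagrangeWeight_of_natDegree_lt_two_mul {p : ℝ[X]} (hp : p.Monic)
    (hpdeg : p.natDegree = Fintype.card ι)
    (horth : ∀ h : ℝ[X], h.degree < Fintype.card ι → ∫ t, p.eval t * h.eval t ∂μ = 0)
    {v : ι → ℝ} (hv : Function.Injective v) (hroot : ∀ j, p.eval (v j) = 0) {q : ℝ[X]}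
    (hq : q.natDegree < 2 * Fintype.card ι) :
    ∫ t, q.eval t ∂μ = ∑ j, lagrangeWeight μ v j * q.eval (v j) := by
  have hdiv : ∀ t, q.eval t = p.eval t * (q /ₘ p).eval t + (q %ₘ p).eval t := fun t => by
    conv_lhs => rw [← modByMonic_add_div q p]
    rw [eval_add, eval_mul, add_comm]
  have hquot : (q /ₘ p).degree < Fintype.card ι := by
    refine degree_le_natDegree.trans_lt ?_
    rw [natDegree_divByMonic q hp, hpdeg]
    exact_mod_cast (by omega : q.natDegree - Fintype.card ι < Fintype.card ι)
  have hrem : (q %ₘ p).degree < Fintype.card ι := by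
    simpa [degree_eq_natDegree hp.ne_zero, hpdeg] using degree_modByMonic_lt q hp
  have hint : Integrable (fun t => p.eval t * (q /ₘ p).eval t) μ := by
    simpa using integrable_eval_of_integrable_pow hmom (p * (q /ₘ p))
  simp only [hdiv, hroot, zero_mul, zero_add]
  rw [integral_add hint (integrable_eval_of_integrable_pow hmom _), horth _ hquot, zero_add,
    integral_eval_eq_sum_lagrangeWeight hmom hv hrem]

end Quadrature

section OrthogonalPolynomials

variable {μ : Measure ℝ}

noncomputable def normalizeL2 (μ : Measure ℝ) (p : ℝ[X]) : ℝ[X] :=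
  (√(∫ t, p.eval t * p.eval t ∂μ))⁻¹ • p

theorem normalizeL2_eq_C_mul {p : ℝ[X]} :
    normalizeL2 μ p = C (√(∫ t, p.eval t * p.eval t ∂μ))⁻¹ * p := smul_eq_C_mul _

theorem degree_normalizeL2 {p : ℝ[X]} (hp : 0 < ∫ t, p.eval t * p.eval t ∂μ) :
    (normalizeL2 μ p).degree = p.degree := by
  rw [normalizeL2_eq_C_mul, degree_C_mul (by positivity)]

theorem eval_normalizeL2_eq_zero_iff {p : ℝ[X]} (hp : 0 < ∫ t, p.eval t * p.eval t ∂μ)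
    {x : ℝ} :
    (normalizeL2 μ p).eval x = 0 ↔ p.eval x = 0 := by
  rw [normalizeL2_eq_C_mul, eval_mul, eval_C, mul_eq_zero, or_iff_right (by positivity)]

theorem integral_eval_normalizeL2_mul_eval_normalizeL2 (p q : ℝ[X]) :
    ∫ t, (normalizeL2 μ p).eval t * (normalizeL2 μ q).eval t ∂μ =
      (√(∫ t, p.eval t * p.eval t ∂μ))⁻¹ * (√(∫ t, q.eval t * q.eval t ∂μ))⁻¹ *
        ∫ t, p.eval t * q.eval t ∂μ := by
  simp only [normalizeL2, eval_smul, smul_eq_mul, mul_mul_mul_comm _ (p.eval _), integral_const_mul]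

variable {P : ℕ → ℝ[X]} (hdeg : ∀ i : ℕ, (P i).degree = i)
  (horth : ∀ i : ℕ, ∀ q : ℝ[X], q.degree < i → ∫ t, (P i).eval t * q.eval t ∂μ = 0)
include hdeg horth

theorem integral_eval_mul_eval_eq_zero_of_ne {i k : ℕ} (hik : i ≠ k) :
    ∫ t, (P i).eval t * (P k).eval t ∂μ = 0 := by
  rcases hik.lt_or_gt with hlt | hgt
  · simp_rw [mul_comm ((P i).eval _)]
    exact horth k (P i) (by rw [hdeg]; exact_mod_cast hlt)
  · exact horth i (P k) (by rw [hdeg]; exact_mod_cast hgt)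

theorem integral_eval_normalizeL2_mul_eval_normalizeL2_eq_ite
    (hpos : ∀ i : ℕ, 0 < ∫ t, (P i).eval t * (P i).eval t ∂μ) (i k : ℕ) :
    ∫ t, (normalizeL2 μ (P i)).eval t * (normalizeL2 μ (P k)).eval t ∂μ =
      if i = k then 1 else 0 := by
  rw [integral_eval_normalizeL2_mul_eval_normalizeL2]
  split_ifs with hik
  · subst hik
    rw [← mul_inv, Real.mul_self_sqrt (hpos i).le, inv_mul_cancel₀ (hpos i).ne']
  · rw [integral_eval_mul_eval_eq_zero_of_ne hdeg horth hik, mul_zero]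

theorem sum_lagrangeWeight_mul_eval_normalizeL2_mul_eval_normalizeL2
    (hmom : ∀ n : ℕ, Integrable (fun t : ℝ => t ^ n) μ)
    (hpos : ∀ i : ℕ, 0 < ∫ t, (P i).eval t * (P i).eval t ∂μ)
    {n : ℕ} (hmonic : (P n).Monic) {lam : Fin n → ℝ} (hlam : Function.Injective lam)
    (hroot : ∀ j, (P n).eval (lam j) = 0)
    (i k : Fin n) :
    ∑ j, lagrangeWeight μ lam j *
        ((normalizeL2 μ (P i)).eval (lam j) * (normalizeL2 μ (P k)).eval (lam j)) =
      if i = k then 1 else 0 := by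
  have hnatDegree : ∀ i, (normalizeL2 μ (P i)).natDegree = i := fun i =>
    natDegree_eq_of_degree_eq_some ((degree_normalizeL2 (hpos i)).trans (hdeg i))
  have hprod :
      (normalizeL2 μ (P i) * normalizeL2 μ (P k)).natDegree < 2 * Fintype.card (Fin n) := by
    have := natDegree_mul_le (p := normalizeL2 μ (P i)) (q := normalizeL2 μ (P k))
    rw [hnatDegree, hnatDegree] at this
    rw [Fintype.card_fin]
    omega
  have hexact := integral_eval_eq_sum_lagrangeWeight_of_natDegree_lt_two_mul hmom hmonic
    (by rw [Fintype.card_fin, natDegree_eq_of_degree_eq_some (hdeg n)])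
    (by simpa using horth n) hlam hroot hprod
  simp only [eval_mul] at hexact
  rw [← hexact, integral_eval_normalizeL2_mul_eval_normalizeL2_eq_ite hdeg horth hpos]
  simp only [Fin.val_inj]

end OrthogonalPolynomials

namespace Matrix

variable {m n R : Type*} [Fintype n] [DecidableEq n]

theorem mul_diagonal_mul_transpose_apply [CommSemiring R] (V : Matrix m n R) (w : n → R)
    (i k : m) : (V * diagonal w * Vᵀ) i k = ∑ j, w j * (V i j * V k j) := by
  rw [mul_apply]
  simp only [mul_diagonal, transpose_apply]
  exact Finset.sum_congr rfl fun j _ => by ring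

theorem mul_sum_sq_eq_one_of_mul_diagonal_mul_transpose_eq_one [Field R] {V : Matrix n n R}
    {w : n → R} (h : V * diagonal w * Vᵀ = 1) (j : n) : w j * ∑ i, V i j ^ 2 = 1 := by
  have h' : diagonal w * Vᵀ * V = 1 := mul_eq_one_comm.mp (by rwa [Matrix.mul_assoc] at h)
  have := congrFun₂ h' j j
  rw [mul_apply, one_apply_eq] at this
  simpa only [diagonal_mul, transpose_apply, Finset.mul_sum, sq, mul_assoc] using this

theorem mul_transpose_eq_one_of_mul_diagonal_mul_transpose_eq_one [DecidableEq m]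
    {V : Matrix m n ℝ} {w : n → ℝ} (hw : ∀ j, 0 ≤ w j) (h : V * diagonal w * Vᵀ = 1) :
    V * diagonal (fun j => √(w j)) * (V * diagonal fun j => √(w j))ᵀ = 1 := by
  rw [transpose_mul, diagonal_transpose, ← Matrix.mul_assoc, Matrix.mul_assoc V,
    diagonal_mul_diagonal]
  simpa only [Real.mul_self_sqrt (hw _)] using h

end Matrix

theorem discrete_orthonormality_gauss_general
    (μ : Measure ℝ)
    (hmom : ∀ n : ℕ, Integrable (fun t : ℝ => t ^ n) μ)
    (ip : ℝ[X] → ℝ[X] → ℝ)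
    (hip : ∀ p q : ℝ[X], ip p q = ∫ t, p.eval t * q.eval t ∂μ)
    (hpos : ∀ p : ℝ[X], p ≠ 0 → 0 < ip p p)
    (P : ℕ → ℝ[X])
    (hmonic : ∀ i : ℕ, (P i).Monic)
    (hdeg : ∀ i : ℕ, (P i).degree = i)
    (horth : ∀ i : ℕ, ∀ q : ℝ[X], q.degree < (i : ℕ) → ip (P i) q = 0)
    (π : ℕ → ℝ[X])
    (hπ : ∀ i : ℕ, π i = (Real.sqrt (ip (P i) (P i)))⁻¹ • P i)
    (n : ℕ)
    (lam : Fin n → ℝ) (hlinj : Function.Injective lam)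
    (hlroot : ∀ j : Fin n, (π n).eval (lam j) = 0)
    (ν : Fin n → ℝ)
    (hν : ∀ j : Fin n, ν j = (∑ i : Fin n, (π i.val).eval (lam j) ^ 2)⁻¹)
    (Q : Matrix (Fin n) (Fin n) ℝ)
    (hQ : ∀ i j : Fin n, Q i j = Real.sqrt (ν j) * (π i.val).eval (lam j)) :
    (∀ i k : Fin n,
      ∑ j : Fin n, ν j * ((π i.val).eval (lam j) * (π k.val).eval (lam j)) =
        if i = k then 1 else 0) ∧
    Qᵀ * Q = 1 ∧ Q * Qᵀ = 1 := by
  simp only [hip] at hpos horth hπ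
  obtain rfl : π = fun i => normalizeL2 μ (P i) := funext hπ
  beta_reduce at hlroot hν hQ
  have hPpos : ∀ i, 0 < ∫ t, (P i).eval t * (P i).eval t ∂μ := fun i =>
    hpos _ (hmonic i).ne_zero
  set V : Matrix (Fin n) (Fin n) ℝ := of fun i j => (normalizeL2 μ (P i)).eval (lam j)
  have hgauss : V * diagonal (lagrangeWeight μ lam) * Vᵀ = 1 := by
    ext i k
    rw [mul_diagonal_mul_transpose_apply, one_apply]
    exact sum_lagrangeWeight_mul_eval_normalizeL2_mul_eval_normalizeL2 hdeg horth hmom hPpos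
      (hmonic n) hlinj (fun j => (eval_normalizeL2_eq_zero_iff (hPpos n)).1 (hlroot j)) i k
  have hν0 : ∀ j, 0 ≤ ν j := fun j => hν j ▸ by positivity
  obtain rfl : ν = lagrangeWeight μ lam := funext fun j => by
    rw [hν, eq_inv_of_mul_eq_one_left
      (mul_sum_sq_eq_one_of_mul_diagonal_mul_transpose_eq_one hgauss j)]
    rfl
  have hQV : Q = V * diagonal fun j => √(lagrangeWeight μ lam j) := by
    ext i j
    simp [hQ, V, mul_comm]
  have hQQt : Q * Qᵀ = 1 :=
    hQV ▸ mul_transpose_eq_one_of_mul_diagonal_mul_transpose_eq_one hν0 hgauss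
  refine ⟨fun i k => ?_, mul_eq_one_comm.mp hQQt, hQQt⟩
  exact (mul_diagonal_mul_transpose_apply V _ i k).symm.trans (by rw [hgauss, one_apply])

/-- the orthonormal polynomials are orthonormal with respect to the
discrete measure of the n-point Gaussian quadrature rule; equivalently the
matrix Q(i,j) = √ν_j · π_i(λ_j) is an orthogonal matrix. -/
theorem discrete_orthonormality_gauss
    (μ : Measure ℝ) [IsProbabilityMeasure μ]
    (hmom : ∀ n : ℕ, Integrable (fun t : ℝ => t ^ n) μ)
    (ip : ℝ[X] → ℝ[X] → ℝ)
    (hip : ∀ p q : ℝ[X], ip p q = ∫ t, p.eval t * q.eval t ∂μ)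
    (hpos : ∀ p : ℝ[X], p ≠ 0 → 0 < ip p p)
    (P : ℕ → ℝ[X])
    (hmonic : ∀ i : ℕ, (P i).Monic)
    (hdeg : ∀ i : ℕ, (P i).degree = i)
    (horth : ∀ i : ℕ, ∀ q : ℝ[X], q.degree < (i : ℕ) → ip (P i) q = 0)
    (π : ℕ → ℝ[X])
    (hπ : ∀ i : ℕ, π i = (Real.sqrt (ip (P i) (P i)))⁻¹ • P i)
    (n : ℕ) (hn : 1 ≤ n)
    (lam : Fin n → ℝ) (hlinj : Function.Injective lam)
    (hlroot : ∀ j : Fin n, (π n).eval (lam j) = 0)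
    (ν : Fin n → ℝ)
    (hν : ∀ j : Fin n, ν j = (∑ i : Fin n, (π i.val).eval (lam j) ^ 2)⁻¹)
    (Q : Matrix (Fin n) (Fin n) ℝ)
    (hQ : ∀ i j : Fin n, Q i j = Real.sqrt (ν j) * (π i.val).eval (lam j)) :
    (∀ i k : Fin n,
      ∑ j : Fin n, ν j * ((π i.val).eval (lam j) * (π k.val).eval (lam j)) =
        if i = k then 1 else 0) ∧
    Qᵀ * Q = 1 ∧ Q * Qᵀ = 1 :=
  discrete_orthonormality_gauss_general μ hmom ip hip hpos P hmonic hdeg horth π hπ n lam hlinj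
    hlroot ν hν Q hQ
end

section
/- The Gaussian quadrature weight equals the square of the first component of the corresponding normalized eigenvector of the Jacobi matrix: if λ_j is a root of π_n and q ∈ ℝ^n is any eigenvector of J with eigenvalue λ_j of unit Euclidean norm, then q_0² = 1 / (Σ_{i=0}^{n−1} π_i(λ_j)²) = ν_j. -/
open MeasureTheory Polynomial Finset
open scoped Matrix

/-! The vector `v = (π_i(λ))_{i<n}` is an eigenvector of `J` for `λ`: `J` is the matrix of
multiplication by `X` in the orthonormal basis `π_0, …, π_{n-1}`, and in the expansion of `X π_i`
over `π_0, …, π_n` the one coefficient falling outside `J` multiplies `π_n(λ) = 0`. A tridiagonal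
matrix with nonzero off-diagonal entries has eigenspaces of dimension at most one (an eigenvector
is recovered row by row from its first entry), so `q = q_0 v`; since `v_0 = π_0(λ) = 1`, the
normalisation `‖q‖ = 1` reads `q_0² ∑ π_i(λ)² = 1`. -/

theorem Matrix.eq_zero_of_mulVec_eq_smul_of_head_eq_zero {K : Type*} [Semiring K]
    [NoZeroDivisors K] {n : ℕ} {A : Matrix (Fin n) (Fin n) K}
    (hA : ∀ i j : Fin n, i.val + 1 < j.val → A i j = 0)
    (hsuper : ∀ i j : Fin n, i.val + 1 = j.val → A i j ≠ 0) {c : K} {w : Fin n → K}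
    (hw : A *ᵥ w = c • w) (h0 : ∀ i : Fin n, i.val = 0 → w i = 0) : w = 0 := by
  suffices ∀ k : ℕ, ∀ i : Fin n, i.val ≤ k → w i = 0 from funext fun i => this i i le_rfl
  intro k
  induction k with
  | zero => exact fun i hi => h0 i (Nat.le_zero.mp hi)
  | succ k ih =>
    intro i hi
    rcases Nat.lt_or_eq_of_le hi with hi | hi
    · exact ih i (Nat.lt_succ_iff.mp hi)
    let i' : Fin n := ⟨k, by omega⟩
    have hrow : A i' i * w i = c * w i' := by
      have hrow' : ∑ j, A i' j * w j = c * w i' := congrFun hw i'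
      rw [← hrow', Finset.sum_eq_single i (fun j _ hji => ?_) (by simp)]
      rcases le_or_gt j.val k with hj | hj
      · rw [ih j hj, mul_zero]
      · rw [hA i' j (by have := Fin.val_ne_of_ne hji; simp only [i']; omega), zero_mul]
    simpa [ih i' le_rfl, hsuper i' i (by simp [i', hi])] using hrow

noncomputable def jacobiMatrix (n : ℕ) (α β : ℕ → ℝ) : Matrix (Fin n) (Fin n) ℝ :=
  Matrix.of fun i j =>
    if i = j then α i.val
    else if i.val + 1 = j.val ∨ j.val + 1 = i.val then √(β (max i.val j.val)) else 0

section JacobiMatrix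

variable {n : ℕ} {α β : ℕ → ℝ}

theorem jacobiMatrix_apply_of_succ_lt {i j : Fin n} (hij : i.val + 1 < j.val) :
    jacobiMatrix n α β i j = 0 := by
  rw [jacobiMatrix, Matrix.of_apply, if_neg (fun h => by subst h; omega), if_neg (by omega)]

theorem jacobiMatrix_apply_of_succ_eq {i j : Fin n} (hij : i.val + 1 = j.val) :
    jacobiMatrix n α β i j = √(β j.val) := by
  rw [jacobiMatrix, Matrix.of_apply, if_neg (fun h => by subst h; omega), if_pos (Or.inl hij),
    ← hij, max_eq_right (Nat.le_succ _)]

theorem eq_smul_of_jacobiMatrix_mulVec_eq_smul (hβ : ∀ i, 0 < β (i + 1)) (hn : 0 < n)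
    {c : ℝ} {v w : Fin n → ℝ} (hv : jacobiMatrix n α β *ᵥ v = c • v)
    (hw : jacobiMatrix n α β *ᵥ w = c • w) (hv0 : v ⟨0, hn⟩ = 1) : w = w ⟨0, hn⟩ • v := by
  rw [← sub_eq_zero]
  refine Matrix.eq_zero_of_mulVec_eq_smul_of_head_eq_zero (A := jacobiMatrix n α β) (c := c)
    (fun i j => jacobiMatrix_apply_of_succ_lt) (fun i j hij => ?_) ?_ fun i hi => ?_
  · rw [jacobiMatrix_apply_of_succ_eq hij, ← hij]
    exact (Real.sqrt_pos.mpr (hβ _)).ne'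
  · rw [Matrix.mulVec_sub, Matrix.mulVec_smul, hv, hw, smul_sub, smul_comm]
  · obtain rfl : i = ⟨0, hn⟩ := Fin.ext hi
    simp [hv0]

end JacobiMatrix

namespace Polynomial

section Moments

variable {μ : Measure ℝ}

theorem integrable_eval_of_integrable_pow (hmom : ∀ n : ℕ, Integrable (fun t : ℝ => t ^ n) μ)
    (p : ℝ[X]) : Integrable (fun t => p.eval t) μ := by
  simp_rw [eval_eq_sum_range]
  exact integrable_finsetSum _ fun i _ => (hmom i).const_mul _

theorem integrable_eval_mul_eval (hmom : ∀ n : ℕ, Integrable (fun t : ℝ => t ^ n) μ)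
    (p q : ℝ[X]) : Integrable (fun t => p.eval t * q.eval t) μ := by
  simpa using integrable_eval_of_integrable_pow hmom (p * q)

noncomputable def momentForm (μ : Measure ℝ) (hmom : ∀ n : ℕ, Integrable (fun t : ℝ => t ^ n) μ) :
    LinearMap.BilinForm ℝ ℝ[X] :=
  LinearMap.mk₂ ℝ (fun p q => ∫ t, p.eval t * q.eval t ∂μ)
    (fun p p' q => by
      simp only [eval_add, add_mul]
      exact integral_add (integrable_eval_mul_eval hmom p q) (integrable_eval_mul_eval hmom p' q))
    (fun c p q => by simp only [eval_smul, smul_eq_mul, mul_assoc, integral_const_mul])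
    (fun p q q' => by
      simp only [eval_add, mul_add]
      exact integral_add (integrable_eval_mul_eval hmom p q) (integrable_eval_mul_eval hmom p q'))
    (fun c p q => by simp only [eval_smul, smul_eq_mul, mul_left_comm, integral_const_mul])

variable {hmom : ∀ n : ℕ, Integrable (fun t : ℝ => t ^ n) μ}

@[simp]
theorem momentForm_apply (p q : ℝ[X]) :
    momentForm μ hmom p q = ∫ t, p.eval t * q.eval t ∂μ := rfl

theorem momentForm_isSymm : (momentForm μ hmom).IsSymm :=
  ⟨fun p q => by simp only [momentForm_apply, mul_comm]⟩

theorem momentForm_X_mul (p q : ℝ[X]) :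
    momentForm μ hmom (X * p) q = momentForm μ hmom p (X * q) := by
  simp only [momentForm_apply, eval_mul, eval_X]
  congr 1 with t
  ring

theorem momentForm_one_one [IsProbabilityMeasure μ] : momentForm μ hmom 1 1 = 1 := by
  simp

end Moments

structure IsOrthonormalSeq (B : LinearMap.BilinForm ℝ ℝ[X]) (π : ℕ → ℝ[X]) : Prop where
  degree_eq : ∀ i : ℕ, (π i).degree = i
  apply_eq_zero_of_degree_lt : ∀ (i : ℕ) (q : ℝ[X]), q.degree < i → B (π i) q = 0
  apply_self : ∀ i, B (π i) (π i) = 1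

namespace IsOrthonormalSeq

variable {B : LinearMap.BilinForm ℝ ℝ[X]} {π : ℕ → ℝ[X]}

theorem apply_eq_ite (h : IsOrthonormalSeq B π) (hB : B.IsSymm) (j k : ℕ) :
    B (π j) (π k) = if j = k then 1 else 0 := by
  rcases lt_trichotomy j k with hjk | rfl | hjk
  · rw [hB.eq, h.apply_eq_zero_of_degree_lt k _ (by rw [h.degree_eq]; exact_mod_cast hjk),
      if_neg hjk.ne]
  · rw [h.apply_self, if_pos rfl]
  · rw [h.apply_eq_zero_of_degree_lt j _ (by rw [h.degree_eq]; exact_mod_cast hjk), if_neg hjk.ne']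

theorem degree_X_mul (h : IsOrthonormalSeq B π) (i : ℕ) : (X * π i).degree = ↑(i + 1) := by
  rw [X_mul, degree_mul_X, h.degree_eq]; norm_cast

theorem mem_span_of_degree_lt (h : IsOrthonormalSeq B π) {m : ℕ} {r : ℝ[X]}
    (hr : r.degree < m) : ∃ c : ℕ → ℝ, ∑ k ∈ range m, c k • π k = r := by
  have hspan := Sequence.span_degreeLT ⟨π, h.degree_eq⟩ (m := m) fun i _ =>
    (leadingCoeff_ne_zero.mpr ((Sequence.ne_zero ⟨π, h.degree_eq⟩ i))).isUnit
  rw [← mem_degreeLT, ← hspan, show Set.Iio m = (range m : Set ℕ) by simp,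
    Submodule.mem_span_image_finset_iff_exists_fun'] at hr
  exact hr

theorem eq_sum_apply_smul (h : IsOrthonormalSeq B π) (hB : B.IsSymm) {m : ℕ} {r : ℝ[X]}
    (hr : r.degree < m) : r = ∑ k ∈ range m, B r (π k) • π k := by
  obtain ⟨c, rfl⟩ := h.mem_span_of_degree_lt hr
  refine sum_congr rfl fun k hk => ?_
  simp [h.apply_eq_ite hB, hk]

theorem apply_X_mul_eq_zero (h : IsOrthonormalSeq B π) (hB : B.IsSymm)
    (hX : ∀ p q, B (X * p) q = B p (X * q)) {i j : ℕ} (hij : i + 1 < j ∨ j + 1 < i) :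
    B (X * π i) (π j) = 0 := by
  rcases hij with hij | hij
  · rw [hB.eq]
    exact h.apply_eq_zero_of_degree_lt j _ (by rw [h.degree_X_mul]; exact_mod_cast hij)
  · rw [hX]
    exact h.apply_eq_zero_of_degree_lt i _ (by rw [h.degree_X_mul]; exact_mod_cast hij)

theorem mulVec_eval_eq_smul (h : IsOrthonormalSeq B π) (hB : B.IsSymm)
    {n : ℕ} {lam : ℝ} (hroot : (π n).eval lam = 0) :
    (Matrix.of fun i j : Fin n => B (X * π i) (π j)) *ᵥ (fun i : Fin n => (π i).eval lam) =
      lam • fun i : Fin n => (π i).eval lam := by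
  ext i
  have hdeg : (X * π i).degree < ↑(n + 1) := by
    rw [h.degree_X_mul]; exact_mod_cast Nat.succ_lt_succ i.isLt
  calc ∑ k : Fin n, B (X * π i) (π k) * (π k).eval lam
      = ∑ k ∈ range n, B (X * π i) (π k) * (π k).eval lam :=
        Fin.sum_univ_eq_sum_range (fun k => B (X * π i) (π k) * (π k).eval lam) n
    _ = (∑ k ∈ range (n + 1), B (X * π i) (π k) • π k).eval lam := by
        simp [eval_finsetSum, sum_range_succ, hroot]
    _ = lam * (π i).eval lam := by rw [← h.eq_sum_apply_smul hB hdeg, eval_mul, eval_X]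

theorem jacobiMatrix_eq (h : IsOrthonormalSeq B π) (hB : B.IsSymm)
    (hX : ∀ p q, B (X * p) q = B p (X * q)) {n : ℕ} {α β : ℕ → ℝ}
    (hα : ∀ i, α i = B (X * π i) (π i)) (hsuper : ∀ i, B (X * π i) (π (i + 1)) = √(β (i + 1))) :
    jacobiMatrix n α β = Matrix.of fun i j : Fin n => B (X * π i) (π j) := by
  ext i j
  rw [jacobiMatrix, Matrix.of_apply, Matrix.of_apply]
  split_ifs with hij hadj
  · rw [hij, hα]
  · rcases hadj with hadj | hadj
    · rw [← hadj, hsuper, max_eq_right (Nat.le_succ _)]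
    · rw [← hadj, hB.eq, ← hX, hsuper, max_eq_left (Nat.le_succ _)]
  · exact (h.apply_X_mul_eq_zero hB hX (by omega)).symm

end IsOrthonormalSeq

section Normalize

variable {B : LinearMap.BilinForm ℝ ℝ[X]} {P π : ℕ → ℝ[X]}

theorem isOrthonormalSeq_of_eq_inv_sqrt_smul (hpos : ∀ i, 0 < B (P i) (P i))
    (hdeg : ∀ i : ℕ, (P i).degree = i)
    (horth : ∀ (i : ℕ) (q : ℝ[X]), q.degree < i → B (P i) q = 0)
    (hπ : ∀ i, π i = (√(B (P i) (P i)))⁻¹ • P i) : IsOrthonormalSeq B π where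
  degree_eq i := by
    rw [hπ, smul_eq_C_mul, degree_C_mul (inv_ne_zero (Real.sqrt_pos.mpr (hpos i)).ne'), hdeg]
  apply_eq_zero_of_degree_lt i q hq := by simp [hπ, horth i q hq]
  apply_self i := by
    rw [hπ, map_smul, map_smul, LinearMap.smul_apply, smul_eq_mul, smul_eq_mul, ← mul_assoc,
      ← mul_inv, Real.mul_self_sqrt (hpos i).le, inv_mul_cancel₀ (hpos i).ne']

theorem apply_X_mul_succ (hB : B.IsSymm) (hmonic : ∀ i, (P i).Monic)
    (hdeg : ∀ i : ℕ, (P i).degree = i)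
    (horth : ∀ (i : ℕ) (q : ℝ[X]), q.degree < i → B (P i) q = 0) (i : ℕ) :
    B (X * P i) (P (i + 1)) = B (P (i + 1)) (P (i + 1)) := by
  have hXP : (X * P i).degree = (P (i + 1)).degree := by
    rw [X_mul, degree_mul_X, hdeg, hdeg]; norm_cast
  have hlow : (X * P i - P (i + 1)).degree < ↑(i + 1) := by
    have := degree_sub_lt_left hXP ((monic_X.mul (hmonic i)).ne_zero)
      (by rw [(monic_X.mul (hmonic i)).leadingCoeff, (hmonic (i + 1)).leadingCoeff])
    rwa [hXP, hdeg] at this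
  rw [hB.eq, ← sub_eq_zero, ← map_sub]
  exact horth _ _ hlow

theorem apply_X_mul_eq_sqrt_div (hB : B.IsSymm) (hpos : ∀ i, 0 < B (P i) (P i))
    (hmonic : ∀ i, (P i).Monic) (hdeg : ∀ i : ℕ, (P i).degree = i)
    (horth : ∀ (i : ℕ) (q : ℝ[X]), q.degree < i → B (P i) q = 0)
    (hπ : ∀ i, π i = (√(B (P i) (P i)))⁻¹ • P i) (i : ℕ) :
    B (X * π i) (π (i + 1)) = √(B (P (i + 1)) (P (i + 1)) / B (P i) (P i)) := by
  have hi := Real.sqrt_pos.mpr (hpos i)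
  have hi' := Real.sqrt_pos.mpr (hpos (i + 1))
  have hsq := Real.mul_self_sqrt (hpos (i + 1)).le
  rw [hπ, hπ, mul_smul_comm, map_smul, map_smul, LinearMap.smul_apply, smul_eq_mul, smul_eq_mul,
    apply_X_mul_succ hB hmonic hdeg horth, Real.sqrt_div' _ (hpos i).le]
  field_simp
  linarith

end Normalize

end Polynomial

/-- the Gaussian quadrature weight equals the square of the first
component of the corresponding unit-norm eigenvector of the Jacobi matrix. -/
theorem gauss_weight_eq_first_eigenvector_component_sq
    (μ : Measure ℝ) [IsProbabilityMeasure μ]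
    (hmom : ∀ n : ℕ, Integrable (fun t : ℝ => t ^ n) μ)
    (ip : ℝ[X] → ℝ[X] → ℝ)
    (hip : ∀ p q : ℝ[X], ip p q = ∫ t, p.eval t * q.eval t ∂μ)
    (hpos : ∀ p : ℝ[X], p ≠ 0 → 0 < ip p p)
    (P : ℕ → ℝ[X])
    (hmonic : ∀ i : ℕ, (P i).Monic)
    (hdeg : ∀ i : ℕ, (P i).degree = i)
    (horth : ∀ i : ℕ, ∀ q : ℝ[X], q.degree < (i : ℕ) → ip (P i) q = 0)
    (π : ℕ → ℝ[X])
    (hπ : ∀ i : ℕ, π i = (Real.sqrt (ip (P i) (P i)))⁻¹ • P i)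
    (α : ℕ → ℝ) (hα : ∀ i : ℕ, α i = ip (X * π i) (π i))
    (β : ℕ → ℝ)
    (hβ : ∀ i : ℕ, 1 ≤ i → β i = ip (P i) (P i) / ip (P (i - 1)) (P (i - 1)))
    (n : ℕ) (hn : 0 < n)
    (J : Matrix (Fin n) (Fin n) ℝ)
    (hJ : ∀ i j : Fin n, J i j =
      if i = j then α i.val
      else if i.val + 1 = j.val ∨ j.val + 1 = i.val then
        Real.sqrt (β (max i.val j.val))
      else 0)
    (lam : ℝ) (hroot : (π n).eval lam = 0)
    (ν : ℝ) (hν : ν = (∑ i : Fin n, (π i.val).eval lam ^ 2)⁻¹)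
    (q : Fin n → ℝ)
    (hq : J.mulVec q = lam • q)
    (hqnorm : ∑ i : Fin n, q i ^ 2 = 1) :
    q ⟨0, hn⟩ ^ 2 = (∑ i : Fin n, (π i.val).eval lam ^ 2)⁻¹ ∧
    q ⟨0, hn⟩ ^ 2 = ν := by

  obtain rfl : ip = fun p q => momentForm μ hmom p q := funext₂ hip
  set B := momentForm μ hmom
  have hB : B.IsSymm := momentForm_isSymm
  have hPpos : ∀ i, 0 < B (P i) (P i) := fun i => hpos _ (hmonic i).ne_zero
  have hon : IsOrthonormalSeq B π := isOrthonormalSeq_of_eq_inv_sqrt_smul hPpos hdeg horth hπ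
  have hβ_succ : ∀ i, β (i + 1) = B (P (i + 1)) (P (i + 1)) / B (P i) (P i) := fun i =>
    hβ (i + 1) (Nat.le_add_left 1 i)
  have hβpos : ∀ i, 0 < β (i + 1) := fun i => hβ_succ i ▸ div_pos (hPpos _) (hPpos _)
  have hsuper : ∀ i, B (X * π i) (π (i + 1)) = √(β (i + 1)) := fun i => by
    rw [apply_X_mul_eq_sqrt_div hB hPpos hmonic hdeg horth hπ, hβ_succ]
  obtain rfl : J = jacobiMatrix n α β := Matrix.ext hJ
  set v : Fin n → ℝ := fun i => (π i).eval lam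
  have hv : jacobiMatrix n α β *ᵥ v = lam • v :=
    hon.jacobiMatrix_eq hB momentForm_X_mul hα hsuper ▸ hon.mulVec_eval_eq_smul hB hroot
  have hv0 : v ⟨0, hn⟩ = 1 := by
    have hP0 : P 0 = 1 := (hmonic 0).natDegree_eq_zero.mp (natDegree_eq_of_degree_eq_some (hdeg 0))
    simp only [v, hπ 0, hP0, B, momentForm_one_one, Real.sqrt_one, inv_one, one_smul, eval_one]
  have hqv := eq_smul_of_jacobiMatrix_mulVec_eq_smul hβpos hn hv hq hv0
  have hsum : q ⟨0, hn⟩ ^ 2 * ∑ i : Fin n, (π i).eval lam ^ 2 = 1 := by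
    rw [← hqnorm, Finset.mul_sum]
    refine Finset.sum_congr rfl fun i _ => ?_
    rw [congrFun hqv i, Pi.smul_apply, smul_eq_mul, mul_pow]
  have hweight := eq_inv_of_mul_eq_one_left hsum
  exact ⟨hweight, hν ▸ hweight⟩
end
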